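/- For every τ ∈ [−n^{1/(β−1)}, n^{1/(β−1)}] one has h(n^{1/(β−1)}, τ) ≤ 0 and h(−n^{1/(β−1)}, τ) ≤ 0, where h(t,τ) := 2(nt − τ|τ|^{β−1})² − C_β (t−τ)(n²t − τ|τ|^{2(β−1)}). -/

import Mathlib

/-!
Write `φ_p(x) = x|x|^p`. Since `φ_p' = (p+1)|x|^p`, the Cauchy–Schwarz inequality
`(∫_s^r g)² ≤ (r - s) ∫_s^r g²` for `g = |x|^p` gives
`(2p+1)(φ_p(r) - φ_p(s))² ≤ (p+1)² (r - s)(φ_{2p}(r) - φ_{2p}(s))` for all `r, s`.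
At `t = ±n^{1/(β-1)}` we have `|t|^{β-1} = n`, so `nt = φ_{β-1}(t)` and
`n²t = φ_{2(β-1)}(t)`;
as `C_β = 2β²/(2β-1)`, the inequality with `p = β - 1` is exactly `h(t, τ) ≤ 0`.
-/

noncomputable section

/-- The function `h(t,τ) = 2(nt − τ|τ|^{β−1})² − C_β (t−τ)(n²t − τ|τ|^{2(β−1)})`. -/
def hfun (β : ℝ) (n : ℕ) (t τ : ℝ) : ℝ :=
  2 * ((n : ℝ) * t - τ * |τ| ^ (β - 1)) ^ 2 -
    (2 + 2 * (β - 1) ^ 2 / (2 * β - 1)) * (t - τ) *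
      ((n : ℝ) ^ 2 * t - τ * |τ| ^ (2 * (β - 1)))

open Real intervalIntegral

theorem sq_intervalIntegral_le_mul_intervalIntegral_sq {g : ℝ → ℝ} {s r : ℝ} (hsr : s ≤ r)
    (hg : IntervalIntegrable g MeasureTheory.volume s r)
    (hg2 : IntervalIntegrable (fun t => g t ^ 2) MeasureTheory.volume s r) :
    (∫ t in s..r, g t) ^ 2 ≤ (r - s) * ∫ t in s..r, g t ^ 2 := by
  have hquad : ∀ c : ℝ,
      0 ≤ (r - s) * (c * c) + (-2 * ∫ t in s..r, g t) * c + ∫ t in s..r, g t ^ 2 := by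
    intro c
    have hexpand : ∫ t in s..r, (g t - c) ^ 2
        = (r - s) * (c * c) + (-2 * ∫ t in s..r, g t) * c + ∫ t in s..r, g t ^ 2 := by
      simp_rw [sub_sq]
      rw [integral_add (hg2.sub (hg.const_mul _ |>.mul_const _)) intervalIntegrable_const,
        integral_sub hg2 (hg.const_mul _ |>.mul_const _), integral_mul_const, integral_const_mul,
        integral_const, smul_eq_mul]
      ring
    exact hexpand ▸ integral_nonneg hsr fun t _ => sq_nonneg _
  have := discrim_le_zero hquad
  rw [discrim] at this
  linarith

theorem hasDerivAt_mul_abs_rpow {p : ℝ} (hp : 0 < p) (x : ℝ) :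
    HasDerivAt (fun y => y * |y| ^ p) ((p + 1) * |x| ^ p) x := by
  rcases lt_trichotomy x 0 with hx | rfl | hx
  · have hneg : HasDerivAt (fun y => -(-y) ^ (p + 1)) ((p + 1) * |x| ^ p) x := by
      refine ((hasDerivAt_rpow_const (p := p + 1) (Or.inl (neg_pos.2 hx).ne')).comp x
        (hasDerivAt_neg x)).neg.congr_deriv ?_
      rw [abs_of_neg hx, add_sub_cancel_right]; ring
    refine hneg.congr_of_eventuallyEq ?_
    filter_upwards [eventually_lt_nhds hx] with y hy
    rw [rpow_add_one (neg_pos.2 hy).ne', abs_of_neg hy]; ring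
  · rw [hasDerivAt_iff_tendsto_slope, abs_zero, zero_rpow hp.ne', mul_zero]
    have hlim : Filter.Tendsto (fun y : ℝ => |y| ^ p) (nhdsWithin 0 {0}ᶜ) (nhds 0) := by
      have := ((continuous_abs.rpow_const fun _ => Or.inr hp.le).tendsto (0 : ℝ)).mono_left
        (nhdsWithin_le_nhds (s := {0}ᶜ))
      rwa [abs_zero, zero_rpow hp.ne'] at this
    refine hlim.congr' ?_
    filter_upwards [self_mem_nhdsWithin] with y hy
    rw [slope_def_field, abs_zero, zero_rpow hp.ne', mul_zero, sub_zero, sub_zero,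
      mul_div_cancel_left₀ _ hy]
  · have hpos : HasDerivAt (fun y => y ^ (p + 1)) ((p + 1) * |x| ^ p) x := by
      convert hasDerivAt_rpow_const (p := p + 1) (Or.inl hx.ne') using 1
      rw [abs_of_pos hx, add_sub_cancel_right]
    refine hpos.congr_of_eventuallyEq ?_
    filter_upwards [eventually_gt_nhds hx] with y hy
    rw [rpow_add_one hy.ne', abs_of_pos hy, mul_comm]

theorem mul_intervalIntegral_abs_rpow {p : ℝ} (hp : 0 < p) (s r : ℝ) :
    (p + 1) * ∫ t in s..r, |t| ^ p = r * |r| ^ p - s * |s| ^ p := by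
  rw [← integral_const_mul]
  exact integral_eq_sub_of_hasDerivAt (fun x _ => hasDerivAt_mul_abs_rpow hp x)
    ((continuous_const.mul (continuous_abs.rpow_const fun _ => Or.inr hp.le)).intervalIntegrable
      _ _)

theorem sq_sub_mul_abs_rpow_le {p : ℝ} (hp : 0 < p) (r s : ℝ) :
    (2 * p + 1) * (r * |r| ^ p - s * |s| ^ p) ^ 2 ≤
      (p + 1) ^ 2 * ((r - s) * (r * |r| ^ (2 * p) - s * |s| ^ (2 * p))) := by
  wlog hsr : s ≤ r generalizing r s
  · convert this s r (le_of_not_ge hsr) using 1 <;> ring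
  have hcont : Continuous fun t : ℝ => |t| ^ p :=
    continuous_abs.rpow_const fun _ => Or.inr hp.le
  have hCS := sq_intervalIntegral_le_mul_intervalIntegral_sq hsr (hcont.intervalIntegrable _ _)
    ((hcont.pow 2).intervalIntegrable _ _)
  have hsq (t : ℝ) : (|t| ^ p) ^ 2 = |t| ^ (2 * p) := by
    rw [← rpow_natCast, ← rpow_mul (abs_nonneg t), mul_comm]; norm_num
  simp only [hsq] at hCS
  rw [← mul_intervalIntegral_abs_rpow hp,
    ← mul_intervalIntegral_abs_rpow (by positivity : 0 < 2 * p)]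
  linear_combination (2 * p + 1) * (p + 1) ^ 2 * hCS

theorem hfun_nonpos {β : ℝ} (hβ : 1 < β) {n : ℕ} {t : ℝ} (ht : |t| ^ (β - 1) = n)
    (τ : ℝ) : hfun β n t τ ≤ 0 := by
  have ht2 : |t| ^ (2 * (β - 1)) = (n : ℝ) ^ 2 := by
    rw [mul_comm, rpow_mul (abs_nonneg t), ht, rpow_two]
  have key := sq_sub_mul_abs_rpow_le (sub_pos.2 hβ) t τ
  rw [ht, ht2] at key
  have h2β : 0 < 2 * β - 1 := by linarith
  have hC : 2 + 2 * (β - 1) ^ 2 / (2 * β - 1) = 2 * β ^ 2 / (2 * β - 1) := by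
    field_simp; ring
  rw [hfun, hC, sub_nonpos, div_mul_eq_mul_div, div_mul_eq_mul_div, le_div_iff₀ h2β]
  linear_combination 2 * key

theorem statement_10_general (β : ℝ) (hβ : 1 < β) (n : ℕ) (τ : ℝ) :
    hfun β n ((n : ℝ) ^ ((1 : ℝ) / (β - 1))) τ ≤ 0 ∧
    hfun β n (-((n : ℝ) ^ ((1 : ℝ) / (β - 1)))) τ ≤ 0 := by
  have hT : |(n : ℝ) ^ ((1 : ℝ) / (β - 1))| ^ (β - 1) = n := by
    rw [abs_of_nonneg (by positivity), one_div, rpow_inv_rpow (Nat.cast_nonneg n) (by linarith)]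
  exact ⟨hfun_nonpos hβ hT τ, hfun_nonpos hβ (by rwa [abs_neg]) τ⟩

/-- For every `τ ∈ [−n^{1/(β−1)}, n^{1/(β−1)}]` one has
`h(n^{1/(β−1)}, τ) ≤ 0` and `h(−n^{1/(β−1)}, τ) ≤ 0`. -/
theorem statement_10 (β : ℝ) (hβ : 1 < β) (n : ℕ) (hn : 0 < n)
    (τ : ℝ)
    (hτ : τ ∈ Set.Icc (-((n : ℝ) ^ ((1 : ℝ) / (β - 1)))) ((n : ℝ) ^ ((1 : ℝ) / (β - 1)))) :
    hfun β n ((n : ℝ) ^ ((1 : ℝ) / (β - 1))) τ ≤ 0 ∧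
    hfun β n (-((n : ℝ) ^ ((1 : ℝ) / (β - 1)))) τ ≤ 0 :=
  statement_10_general β hβ n τ
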